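/- arXiv:1502.03607 — 2 statements merged into one kernel-verified Lean document; each statement's English description precedes it below -/
import Mathlib

section
/- Let (A, (·,·), R) be an extended affine root supersystem over a field F of characteristic zero. Then the set of Cartan integers {2(α,β)/(α,α) : α ∈ R_re \ {0}, β ∈ R} is a bounded subset of ℤ, i.e., there exists N ∈ ℕ such that for all α ∈ R_re \ {0} and β ∈ R the integer k with 2(α,β)/(α,α) = k·1_F satisfies |k| ≤ N. Moreover, for every α ∈ R_re \ {0} and every β ∈ R_ns one has 2(α,β)/(α,α) ∈ {0, ±1, ±2}. -/
open Pointwise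

/-- A symmetric biadditive form with values in `F`. -/
structure IsSymForm {F : Type*} [Field F] {A : Type*} [AddCommGroup A]
    (form : A → A → F) : Prop where
  symm : ∀ a b, form a b = form b a
  add_left : ∀ a b c, form (a + b) c = form a c + form b c

/-- The radical `A⁰` of a form. -/
def formRadical {F : Type*} [Field F] {A : Type*} [AddCommGroup A]
    (form : A → A → F) : Set A := {a | ∀ b, form a b = 0}

/-- The set of real roots `R_re = {α ∈ R | (α,α) ≠ 0} ∪ {0}`. -/
def reRoots {F : Type*} [Field F] {A : Type*} [AddCommGroup A]
    (form : A → A → F) (R : Set A) : Set A :=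
  {α | α ∈ R ∧ form α α ≠ 0} ∪ {0}

/-- The set of nonsingular roots `R_ns = {α ∈ R \ A⁰ | (α,α) = 0} ∪ {0}`. -/
def nsRoots {F : Type*} [Field F] {A : Type*} [AddCommGroup A]
    (form : A → A → F) (R : Set A) : Set A :=
  {α | α ∈ R ∧ form α α = 0 ∧ α ∉ formRadical form} ∪ {0}

/-- Extended affine root supersystem. -/
structure IsEARS {F : Type*} [Field F] [CharZero F] {A : Type*} [AddCommGroup A]
    (form : A → A → F) (R : Set A) extends IsSymForm form : Prop where
  zero_mem : (0 : A) ∈ R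
  closure_eq_top : AddSubgroup.closure R = ⊤
  neg_mem : ∀ α ∈ R, -α ∈ R
  cartan : ∀ α ∈ R, form α α ≠ 0 → ∀ β ∈ R, ∃ k : ℤ, 2 * form α β = (k : F) * form α α
  string : ∀ α ∈ R, form α α ≠ 0 → ∀ β ∈ R, ∃ p q : ℕ,
      2 * form β α = ((p : F) - (q : F)) * form α α ∧
      (∀ k : ℤ, β + k • α ∈ R ↔ -(p : ℤ) ≤ k ∧ k ≤ (q : ℤ))
  ns_string : ∀ α ∈ R, form α α = 0 → ∀ β ∈ R, form α β ≠ 0 →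
      (β - α ∈ R ∨ β + α ∈ R)

/-- Locally finite root supersystem: an EARS with nondegenerate form. -/
def IsLFRSS {F : Type*} [Field F] [CharZero F] {A : Type*} [AddCommGroup A]
    (form : A → A → F) (R : Set A) : Prop :=
  IsEARS form R ∧ ∀ a : A, (∀ b, form a b = 0) → a = 0

/-- `α` and `β` are connected in `X` by a finite chain with consecutive
elements non-orthogonal. -/
def ConnectedIn {F : Type*} [Field F] {A : Type*} [AddCommGroup A]
    (form : A → A → F) (X : Set A) (α β : A) : Prop :=
  ∃ (n : ℕ) (c : Fin (n + 1) → A), (∀ i, c i ∈ X) ∧ c 0 = α ∧ c (Fin.last n) = β ∧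
    ∀ i : Fin n, form (c i.castSucc) (c i.succ) ≠ 0

/-- A connected subset. -/
def IsConnectedSet {F : Type*} [Field F] {A : Type*} [AddCommGroup A]
    (form : A → A → F) (X : Set A) : Prop :=
  ∀ α ∈ X, ∀ β ∈ X, ConnectedIn form X α β

/-- Irreducibility: `R_re ≠ {0}` and `R \ R⁰` is connected. -/
def IsIrreducibleRSS {F : Type*} [Field F] {A : Type*} [AddCommGroup A]
    (form : A → A → F) (R : Set A) : Prop :=
  reRoots form R ≠ {0} ∧ IsConnectedSet form (R \ formRadical form)

/-- Sub-supersystem of a locally finite root supersystem. -/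
def IsSubSupersystem {F : Type*} [Field F] {A : Type*} [AddCommGroup A]
    (form : A → A → F) (R S : Set A) : Prop :=
  S ⊆ R ∧
  (∀ a ∈ AddSubgroup.closure S, (∀ b ∈ AddSubgroup.closure S, form a b = 0) → a = 0) ∧
  (0 : A) ∈ S ∧
  (∀ α ∈ S, form α α ≠ 0 → ∀ β ∈ S, ∀ k : ℤ,
      2 * form β α = (k : F) * form α α → β - k • α ∈ S) ∧
  (∀ γ ∈ S, form γ γ = 0 → ∀ β ∈ S, form β γ ≠ 0 → (γ - β ∈ S ∨ γ + β ∈ S))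

/-- `Π` is an integral base of `R` (a `ℤ`-basis of the group generated by `R`). -/
def IsIntegralBase {F : Type*} [Field F] {A : Type*} [AddCommGroup A]
    (form : A → A → F) (R P : Set A) : Prop :=
  P ⊆ R ∧ LinearIndependent ℤ (fun p : P => (p : A)) ∧
    Submodule.span ℤ P = Submodule.span ℤ R

/-- `Π` is a base of `R`. -/
def IsBase {F : Type*} [Field F] {A : Type*} [AddCommGroup A]
    (form : A → A → F) (R P : Set A) : Prop :=
  IsIntegralBase form R P ∧
  ∀ α ∈ R \ formRadical form, ∃ (n : ℕ) (a : Fin n → A) (r : Fin n → ℤ),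
    (∀ i, a i ∈ P) ∧ (∀ i, r i = 1 ∨ r i = -1) ∧
    α = ∑ i, r i • a i ∧
    ∀ t : Fin n, (∑ i ∈ Finset.Iic t, r i • a i) ∈ R \ formRadical form

/-!
For a real root `α` and `β ∈ R` with Cartan integer `k ≥ 0`, the `α`-string through `β`
contains `γ_j = β - j α` for `0 ≤ j ≤ k`. If `n (β,β) = c (α,α)`, then
`n (γ_j,γ_j) = (c - j n (k - j)) (α,α)`, so whenever `γ_j` is real the integrality of
`2(γ_j,α)/(γ_j,γ_j)` gives `c - j n (k - j) ∣ n (k - 2j)`.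
For isotropic `β` (`n = 1`, `c = 0`) the case `j = 1` reads `k - 1 ∣ k - 2`, so `k ≤ 2`.
For real `β`, with `n` the Cartan integer of `β` on `α` and `c = k`, the cases `j = 1, 2, 3`
are incompatible once `k ≥ 7`. Replacing `β` by `-β` handles `k < 0`.
-/
lemma eq_one_or_eq_two_or_eq_of_dvd {k m : ℤ} (hk : 3 ≤ k) (hm : m ≠ 0)
    (h : k - m * (k - 1) ∣ m * (k - 2)) : m = 1 ∨ m = 2 ∨ m = k := by
  have hkm : k - m * (k - 1) ∣ k - m := by
    rw [show k - m = m * (k - 2) + (k - m * (k - 1)) by ring]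
    exact dvd_add h dvd_rfl
  by_contra! hne
  obtain hm | hm | hm : m < 0 ∨ (2 < m ∧ m < k) ∨ k < m := by omega
  · nlinarith [Int.le_of_dvd (by omega) hkm]
  · nlinarith [Int.le_of_dvd (by omega) (Int.neg_dvd.2 hkm)]
  · nlinarith [Int.le_of_dvd (by omega) (Int.neg_dvd.2 (Int.dvd_neg.2 hkm))]

lemma false_of_forall_dvd_of_seven_le {k m : ℤ} (hk : 7 ≤ k) (hm : m ≠ 0)
    (H : ∀ j, 0 ≤ j → j ≤ k → k - j * m * (k - j) ≠ 0 → k - j * m * (k - j) ∣ m * (k - 2 * j)) :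
    False := by
  have hd₁ : k - m * (k - 1) ≠ 0 := by
    obtain hm | rfl | hm : m < 1 ∨ m = 1 ∨ 1 < m := by omega
    all_goals nlinarith
  have h₁ := H 1 (by omega) (by omega) (by simpa only [one_mul] using hd₁)
  simp only [one_mul, mul_one] at h₁
  obtain rfl | rfl | hmk := eq_one_or_eq_two_or_eq_of_dvd (by omega) hm h₁
  · have h₃ := Int.neg_dvd.2 (H 3 (by omega) (by omega) (by omega))
    have := Int.le_of_dvd (by omega) h₃
    omega
  · have h₂ := Int.neg_dvd.2 (H 2 (by omega) (by omega) (by omega))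
    have := Int.le_of_dvd (by omega) h₂
    omega
  · subst m
    have hd₂ : k - 2 * k * (k - 2) = k * -(2 * k - 5) := by ring
    have h₂ := H 2 (by omega) (by omega) (by rw [hd₂]; exact mul_ne_zero (by omega) (by omega))
    rw [hd₂, mul_dvd_mul_iff_left (by omega), Int.neg_dvd] at h₂
    have := Int.le_of_dvd (by omega) h₂
    omega

namespace IsSymForm

variable {F : Type*} [Field F] {A : Type*} [AddCommGroup A] {form : A → A → F}

def addMonoidHomLeft (hs : IsSymForm form) (b : A) : A →+ F :=
  AddMonoidHom.mk' (form · b) fun x y => hs.add_left x y b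

lemma zero_left (hs : IsSymForm form) (a : A) : form 0 a = 0 :=
  (hs.addMonoidHomLeft a).map_zero

lemma neg_left (hs : IsSymForm form) (a b : A) : form (-a) b = -form a b :=
  (hs.addMonoidHomLeft b).map_neg a

lemma neg_right (hs : IsSymForm form) (a b : A) : form a (-b) = -form a b := by
  rw [hs.symm, hs.neg_left, hs.symm]

lemma sub_zsmul_left (hs : IsSymForm form) (a b c : A) (j : ℤ) :
    form (b - j • a) c = form b c - j * form a c := by
  have := (hs.addMonoidHomLeft c).map_sub b (j • a)
  rwa [map_zsmul, zsmul_eq_mul] at this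

lemma sub_zsmul_right (hs : IsSymForm form) (a b c : A) (j : ℤ) :
    form c (b - j • a) = form c b - j * form c a := by
  rw [hs.symm, hs.sub_zsmul_left, hs.symm b, hs.symm a]

lemma sub_zsmul_self (hs : IsSymForm form) (a b : A) (j : ℤ) :
    form (b - j • a) (b - j • a) = form b b - 2 * j * form a b + j ^ 2 * form a a := by
  rw [hs.sub_zsmul_left, hs.sub_zsmul_right, hs.sub_zsmul_right, hs.symm b a]
  ring

end IsSymForm

namespace IsEARS

variable {F : Type*} [Field F] [CharZero F] {A : Type*} [AddCommGroup A] {form : A → A → F}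
  {R : Set A} {α β : A} {k : ℤ}

lemma cartan_neg (h : IsEARS form R) (hk : 2 * form α β = k * form α α) :
    2 * form α (-β) = ((-k : ℤ) : F) * form α α := by
  rw [h.neg_right, Int.cast_neg]
  linear_combination -hk

lemma sub_zsmul_mem (h : IsEARS form R) (hα : α ∈ R) (hαα : form α α ≠ 0) (hβ : β ∈ R)
    (hk : 2 * form α β = k * form α α) {j : ℤ} (hj₀ : 0 ≤ j) (hjk : j ≤ k) :
    β - j • α ∈ R := by
  obtain ⟨p, q, hpq, hstring⟩ := h.string α hα hαα β hβ
  have hpqk : (p : ℤ) - q = k := by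
    have : (((p : ℤ) - q : ℤ) : F) = k :=
      mul_right_cancel₀ hαα (by push_cast; rw [← hpq, h.symm, hk])
    exact_mod_cast this
  rw [sub_eq_add_neg, ← neg_zsmul]
  exact (hstring (-j)).2 ⟨by omega, by omega⟩

lemma dvd_of_sub_zsmul_mem (h : IsEARS form R) (hα : α ∈ R) (hαα : form α α ≠ 0) (hβ : β ∈ R)
    (hk : 2 * form α β = k * form α α) {n c : ℤ} (hnc : n * form β β = c * form α α)
    {j : ℤ} (hj₀ : 0 ≤ j) (hjk : j ≤ k) (hd : c - j * n * (k - j) ≠ 0) :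
    c - j * n * (k - j) ∣ n * (k - 2 * j) := by
  set γ := β - j • α
  have hγγ : n * form γ γ = ((c - j * n * (k - j) : ℤ) : F) * form α α := by
    rw [h.sub_zsmul_self]
    push_cast
    linear_combination hnc - n * j * hk
  have hγγ₀ : form γ γ ≠ 0 := by
    intro h₀
    rw [h₀, mul_zero] at hγγ
    exact mul_ne_zero (by exact_mod_cast hd) hαα hγγ.symm
  obtain ⟨t, ht⟩ := h.cartan γ (h.sub_zsmul_mem hα hαα hβ hk hj₀ hjk) hγγ₀ α hα
  refine ⟨t, ?_⟩
  have : ((n * (k - 2 * j) : ℤ) : F) * form α α = ((c - j * n * (k - j)) * t : ℤ) * form α α := by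
    rw [h.sub_zsmul_left, h.symm β] at ht
    push_cast at hγγ ⊢
    linear_combination n * ht - n * hk + t * hγγ
  exact_mod_cast mul_right_cancel₀ hαα this

lemma le_two_of_isotropic (h : IsEARS form R) (hα : α ∈ R) (hαα : form α α ≠ 0) (hβ : β ∈ R)
    (hββ : form β β = 0) (hk : 2 * form α β = k * form α α) : k ≤ 2 := by
  by_contra! hk₃
  have hdvd := h.dvd_of_sub_zsmul_mem hα hαα hβ hk (n := 1) (c := 0) (by simp [hββ])
    (j := 1) zero_le_one (by omega) (by omega)
  have := Int.le_of_dvd (by omega) (Int.neg_dvd.2 hdvd)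
  omega

lemma le_six_of_real (h : IsEARS form R) (hα : α ∈ R) (hαα : form α α ≠ 0) (hβ : β ∈ R)
    (hββ : form β β ≠ 0) (hk : 2 * form α β = k * form α α) : k ≤ 6 := by
  by_contra! hk₇
  obtain ⟨m, hm⟩ := h.cartan β hβ hββ α hα
  have hmk : m * form β β = k * form α α := by rw [← hm, ← hk, h.symm]
  have hm₀ : m ≠ 0 := by
    rintro rfl
    have : (k : F) = 0 := by simpa [hαα, eq_comm] using hmk
    norm_cast at this
    omega
  exact false_of_forall_dvd_of_seven_le hk₇ hm₀ fun j hj₀ hjk hd =>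
    h.dvd_of_sub_zsmul_mem hα hαα hβ hk hmk hj₀ hjk hd

lemma natAbs_le_two_of_isotropic (h : IsEARS form R) (hα : α ∈ R) (hαα : form α α ≠ 0)
    (hβ : β ∈ R) (hββ : form β β = 0) (hk : 2 * form α β = k * form α α) : k.natAbs ≤ 2 := by
  have := h.le_two_of_isotropic hα hαα hβ hββ hk
  have := h.le_two_of_isotropic hα hαα (h.neg_mem β hβ)
    (by rw [h.neg_left, h.neg_right, neg_neg, hββ]) (h.cartan_neg hk)
  omega

lemma natAbs_le_six_of_real (h : IsEARS form R) (hα : α ∈ R) (hαα : form α α ≠ 0)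
    (hβ : β ∈ R) (hββ : form β β ≠ 0) (hk : 2 * form α β = k * form α α) : k.natAbs ≤ 6 := by
  have := h.le_six_of_real hα hαα hβ hββ hk
  have := h.le_six_of_real hα hαα (h.neg_mem β hβ)
    (by rwa [h.neg_left, h.neg_right, neg_neg]) (h.cartan_neg hk)
  omega

lemma mem_of_mem_nsRoots (h : IsEARS form R) (hβ : β ∈ nsRoots form R) :
    β ∈ R ∧ form β β = 0 := by
  rcases hβ with ⟨hβR, hββ, -⟩ | rfl
  · exact ⟨hβR, hββ⟩
  · exact ⟨h.zero_mem, h.zero_left 0⟩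

end IsEARS

theorem stmt9 {F : Type*} [Field F] [CharZero F] {A : Type*} [AddCommGroup A]
    (form : A → A → F) (R : Set A) (h : IsEARS form R) :
    (∃ N : ℕ, ∀ α ∈ R, form α α ≠ 0 → ∀ β ∈ R, ∀ k : ℤ,
        2 * form α β = (k : F) * form α α → k.natAbs ≤ N) ∧
    (∀ α ∈ reRoots form R, α ≠ 0 → ∀ β ∈ nsRoots form R, ∀ k : ℤ,
        2 * form α β = (k : F) * form α α →
        (k = 0 ∨ k = 1 ∨ k = -1 ∨ k = 2 ∨ k = -2)) := by
  refine ⟨⟨6, fun α hα hαα β hβ k hk => ?_⟩, fun α hα hα₀ β hβ k hk => ?_⟩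
  · by_cases hββ : form β β = 0
    · exact (h.natAbs_le_two_of_isotropic hα hαα hβ hββ hk).trans (by norm_num)
    · exact h.natAbs_le_six_of_real hα hαα hβ hββ hk
  · obtain ⟨hαR, hαα⟩ : α ∈ R ∧ form α α ≠ 0 := by simpa [reRoots, hα₀] using hα
    obtain ⟨hβR, hββ⟩ := h.mem_of_mem_nsRoots hβ
    have := h.natAbs_le_two_of_isotropic hαR hαα hβR hββ hk
    omega
end

section
/- Let (A, (·,·), R) be an extended affine root supersystem over a field F of characteristic zero. Let ¯ : A → Ā := A/A⁰ be the canonical epimorphism and let (·,·)^¯ be the induced form on Ā defined by (ā, b̄) := (a, b) for a, b ∈ A (this is well defined). Then (Ā, (·,·)^¯, R̄) is a locally finite root supersystem, where R̄ denotes the image of R in Ā. Moreover, if R is irreducible then R̄ is irreducible. -/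
open Pointwise

/-- The radical as an additive subgroup (for a symmetric biadditive form). -/
def radicalSubgroup {F : Type*} [Field F] {A : Type*} [AddCommGroup A]
    (form : A → A → F) (hs : IsSymForm form) : AddSubgroup A where
  carrier := formRadical form
  zero_mem' := by
    intro b
    have h := hs.add_left 0 0 b
    rw [add_zero] at h
    linear_combination -h
  add_mem' := by
    intro a b ha hb c
    rw [hs.add_left, ha c, hb c, add_zero]
  neg_mem' := by
    intro a ha c
    have h0 : form 0 c = 0 := by
      have h := hs.add_left 0 0 c
      rw [add_zero] at h
      linear_combination -h
    have h := hs.add_left a (-a) c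
    rw [add_neg_cancel, h0, ha c, zero_add] at h
    exact h.symm

/-
In `Ā = A / A⁰` every axiom except (S4) is inherited from `R` on the nose, and the form
becomes nondegenerate. Irreducibility passes to the image because a root lies outside the
radical iff its image does.

For (S4), fix a real root `ᾱ` and `β̄ ∈ R̄`, and let `S` be the set of `k` with
`β̄ + kᾱ ∈ R̄`, with `2(β, α)/(α, α) = c`. A lift `γ ∈ R` of `β̄ + kᾱ` has an `α`-string in
`R` whose image is an interval of `S` containing `k` and `-c - k`. Moreover
`(γ, γ) = (k² + ck + t)(α, α)` with `t = (β, β)/(α, α)`, and the Cartan integer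
`2(γ, α)/(γ, γ)` forces this quadratic to be at most its derivative `2k + c` in size, which
bounds `S`. A bounded set of integers containing `0` and, with each `k`, the interval between
`k` and `-c - k`, is an interval `[-p, q]` with `p - q = c`.
-/

theorem Int.exists_eq_Icc_of_uIcc_subset {S : Set ℤ} {c : ℤ} (h0 : 0 ∈ S) (hbdd : BddAbove S)
    (hrefl : ∀ k ∈ S, Set.uIcc k (-c - k) ⊆ S) :
    ∃ p q : ℕ, (p : ℤ) - q = c ∧ S = Set.Icc (-(p : ℤ)) q := by
  obtain ⟨M, hM, hMmax⟩ := Int.exists_greatest_of_bdd hbdd ⟨0, h0⟩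
  have hrefl_mem (k : ℤ) (hk : k ∈ S) : -c - k ∈ S := hrefl k hk Set.right_mem_uIcc
  have hM0 : 0 ≤ M := hMmax 0 h0
  have hcM : 0 ≤ c + M := by have := hMmax _ (hrefl_mem 0 h0); omega
  refine ⟨(c + M).toNat, M.toNat, by omega, ?_⟩
  rw [Int.toNat_of_nonneg hcM, Int.toNat_of_nonneg hM0, neg_add']
  refine subset_antisymm ?_ ?_
  · intro k hk
    have := hMmax _ (hrefl_mem k hk)
    exact ⟨by omega, hMmax k hk⟩
  · rw [← Set.uIcc_of_ge (by omega)]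
    exact hrefl M hM

theorem abs_le_of_quadratic_cartan {K : Type*} [Field K] [LinearOrder K] [IsStrictOrderedRing K]
    {c r k : K} (h : k ^ 2 + c * k + r ≠ 0 → ∃ m : ℤ, 2 * k + c = m * (k ^ 2 + c * k + r)) :
    |k| ≤ |c| + |r| + 3 := by
  by_contra! hk
  have hQ : |2 * k + c| < |k ^ 2 + c * k + r| := by
    have hlin : |2 * k + c| ≤ 2 * |k| + |c| := by
      simpa [abs_mul] using abs_add_le (2 * k) c
    have hquad : |k| ^ 2 - |c| * |k| - |r| ≤ |k ^ 2 + c * k + r| := by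
      have h1 := abs_sub_abs_le_abs_sub (k ^ 2) (-(c * k + r))
      have h2 := abs_add_le (c * k) r
      rw [abs_pow, abs_neg, sub_neg_eq_add, ← add_assoc] at h1
      rw [abs_mul] at h2
      linarith
    nlinarith [abs_nonneg c, abs_nonneg r]
  obtain ⟨m, hm⟩ := h (abs_pos.mp ((abs_nonneg _).trans_lt hQ))
  rcases eq_or_ne m 0 with rfl | hm0
  · have : |k| = |c| / 2 := by
      rw [show k = -c / 2 by simp at hm; linarith, abs_div, abs_neg, abs_two]
    linarith [abs_nonneg c, abs_nonneg r]
  · have : |k ^ 2 + c * k + r| ≤ |2 * k + c| := by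
      rw [hm, abs_mul]
      exact le_mul_of_one_le_left (abs_nonneg _) (by exact_mod_cast Int.one_le_abs hm0)
    linarith

namespace IsSymForm

variable {F : Type*} [Field F] {A : Type*} [AddCommGroup A] {form : A → A → F}
  (hs : IsSymForm form)
include hs

theorem add_right (a b c : A) : form a (b + c) = form a b + form a c := by
  rw [hs.symm, hs.add_left, hs.symm b, hs.symm c]

theorem zsmul_left (k : ℤ) (a b : A) : form (k • a) b = k * form a b := by
  simpa [zsmul_eq_mul] using (AddMonoidHom.mk' (form · b) (hs.add_left · · b)).map_zsmul k a

theorem zsmul_right (k : ℤ) (a b : A) : form a (k • b) = k * form a b := by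
  rw [hs.symm, hs.zsmul_left, hs.symm]

theorem add_zsmul_left_self (β α : A) (k : ℤ) :
    form (β + k • α) α = form β α + k * form α α := by
  rw [hs.add_left, hs.zsmul_left]

theorem add_zsmul_self (β α : A) (k : ℤ) :
    form (β + k • α) (β + k • α) = form β β + 2 * k * form β α + k ^ 2 * form α α := by
  simp only [hs.add_left, hs.add_right, hs.zsmul_left, hs.zsmul_right, hs.symm α β]
  ring

theorem reRoots_ne_singleton_zero_iff {R : Set A} :
    reRoots form R ≠ {0} ↔ ∃ a ∈ R, form a a ≠ 0 := by
  constructor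
  · intro hre
    by_contra! hR
    refine hre (Set.ext fun a => ?_)
    simp +contextual [reRoots, hR]
  · rintro ⟨a, ha, haa⟩ hre
    have ha0 : a ∈ reRoots form R := Or.inl ⟨ha, haa⟩
    rw [hre, Set.mem_singleton_iff] at ha0
    rw [ha0, ← zero_smul ℤ (0 : A), hs.zsmul_left, Int.cast_zero, zero_mul] at haa
    exact haa rfl

theorem of_surjective {B : Type*} [AddCommGroup B] {form' : B → B → F} {f : A →+ B}
    (hf : Function.Surjective f) (hform : ∀ a b, form' (f a) (f b) = form a b) :
    IsSymForm form' where
  symm x y := by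
    obtain ⟨a, rfl⟩ := hf x
    obtain ⟨b, rfl⟩ := hf y
    rw [hform, hform, hs.symm]
  add_left x y z := by
    obtain ⟨a, rfl⟩ := hf x
    obtain ⟨b, rfl⟩ := hf y
    obtain ⟨c, rfl⟩ := hf z
    rw [← map_add, hform, hform, hform, hs.add_left]

end IsSymForm

/- The case split is on whether `t` is rational: if it is not, only `k = -c / 2` qualifies;
if it is, the quadratic outgrows its derivative. -/
theorem bddAbove_setOf_quadratic_cartan {F : Type*} [Field F] [CharZero F] (c : ℤ) (t : F) :
    BddAbove {k : ℤ | (k ^ 2 + c * k + t : F) ≠ 0 →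
      ∃ m : ℤ, (2 * k + c : F) = m * (k ^ 2 + c * k + t)} := by
  by_cases ht : t ∈ Set.range ((↑) : ℚ → F)
  · obtain ⟨r, rfl⟩ := ht
    refine ⟨⌈|(c : ℚ)| + |r| + 3⌉, fun k hk => ?_⟩
    have hkQ : |(k : ℚ)| ≤ |(c : ℚ)| + |r| + 3 := by
      refine abs_le_of_quadratic_cartan fun hQ => ?_
      obtain ⟨m, hm⟩ := hk (by exact_mod_cast hQ)
      exact ⟨m, by exact_mod_cast hm⟩
    exact_mod_cast (le_abs_self _).trans (hkQ.trans (Int.le_ceil _))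
  · refine ⟨|c|, fun k hk => ?_⟩
    have hQ : (k ^ 2 + c * k + t : F) ≠ 0 := fun h0 =>
      ht ⟨-(k ^ 2 + c * k), by push_cast; linear_combination -h0⟩
    obtain ⟨m, hm⟩ := hk hQ
    obtain rfl : m = 0 := by
      by_contra hm0
      refine ht ⟨(2 * k + c) / m - (k ^ 2 + c * k), ?_⟩
      have : (m : F) ≠ 0 := by exact_mod_cast hm0
      push_cast
      rw [sub_eq_iff_eq_add, div_eq_iff this]
      linear_combination hm
    have hk0 : 2 * k + c = 0 := by exact_mod_cast (by simpa using hm : (2 * k + c : F) = 0)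
    have := neg_le_abs c
    have := abs_nonneg c
    omega

theorem IsSymForm.root_string_eq_Icc {F : Type*} [Field F] [CharZero F] {B : Type*}
    [AddCommGroup B] {form : B → B → F} (hs : IsSymForm form) {R : Set B} {α β : B}
    (hα : form α α ≠ 0) (hβ : β ∈ R)
    (hcartan : ∀ γ ∈ R, form γ γ ≠ 0 → ∃ m : ℤ, 2 * form γ α = m * form γ γ)
    (hstring : ∀ γ ∈ R, ∃ p q : ℕ, 2 * form γ α = ((p : F) - (q : F)) * form α α ∧
      ∀ k : ℤ, -(p : ℤ) ≤ k → k ≤ q → γ + k • α ∈ R) :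
    ∃ p q : ℕ, 2 * form β α = ((p : F) - (q : F)) * form α α ∧
      ∀ k : ℤ, β + k • α ∈ R ↔ -(p : ℤ) ≤ k ∧ k ≤ q := by
  obtain ⟨c, hβα⟩ : ∃ c : ℤ, 2 * form β α = c * form α α := by
    obtain ⟨p₀, q₀, hβα, -⟩ := hstring β hβ
    exact ⟨p₀ - q₀, by rw [hβα]; push_cast; rfl⟩
  have hγα (k : ℤ) : 2 * form (β + k • α) α = (2 * k + c) * form α α := by
    rw [hs.add_zsmul_left_self]; linear_combination hβα
  set S := {k : ℤ | β + k • α ∈ R}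
  have h0 : (0 : ℤ) ∈ S := by simpa [S] using hβ
  have hrefl : ∀ k ∈ S, Set.uIcc k (-c - k) ⊆ S := by
    intro k hk j hj
    obtain ⟨P, Q, hPQ, hPQR⟩ := hstring _ hk
    have hPQ : (P : ℤ) - Q = 2 * k + c := by
      exact_mod_cast mul_right_cancel₀ hα (hPQ.symm.trans (hγα k))
    have := hPQR (j - k) (by rw [Set.mem_uIcc] at hj; omega) (by rw [Set.mem_uIcc] at hj; omega)
    rwa [add_assoc, ← add_zsmul, add_sub_cancel] at this
  have hbdd : BddAbove S := by
    refine BddAbove.mono ?_ (bddAbove_setOf_quadratic_cartan c (form β β / form α α))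
    intro k hk hQ
    have hγγ : form (β + k • α) (β + k • α) =
        (k ^ 2 + c * k + form β β / form α α) * form α α := by
      rw [hs.add_zsmul_self]
      field_simp
      linear_combination k * hβα
    obtain ⟨m, hm⟩ := hcartan _ hk (by rw [hγγ]; exact mul_ne_zero hQ hα)
    refine ⟨m, mul_right_cancel₀ hα ?_⟩
    rw [← hγα, hm, hγγ, mul_assoc]
  obtain ⟨p, q, hpq, hS⟩ := Int.exists_eq_Icc_of_uIcc_subset h0 hbdd hrefl
  refine ⟨p, q, ?_, fun k => Set.ext_iff.mp hS k⟩
  rw [hβα, ← hpq]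
  push_cast
  rfl

section Image

variable {F : Type*} [Field F] {A B : Type*} [AddCommGroup A] [AddCommGroup B]
  {form : A → A → F} {form' : B → B → F} {f : A →+ B}

theorem ConnectedIn.image (hform : ∀ a b, form' (f a) (f b) = form a b) {X : Set A} {Y : Set B}
    (hXY : Set.MapsTo f X Y) {α β : A} (h : ConnectedIn form X α β) :
    ConnectedIn form' Y (f α) (f β) := by
  obtain ⟨n, c, hcX, hc0, hcn, hc⟩ := h
  exact ⟨n, f ∘ c, fun i => hXY (hcX i), by simp [hc0], by simp [hcn],
    fun i => by simpa [hform] using hc i⟩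

theorem mem_formRadical_of_map (hform : ∀ a b, form' (f a) (f b) = form a b) {a : A}
    (ha : f a ∈ formRadical form') : a ∈ formRadical form :=
  fun b => hform a b ▸ ha (f b)

theorem map_mem_formRadical (hf : Function.Surjective f)
    (hform : ∀ a b, form' (f a) (f b) = form a b) {a : A} (ha : a ∈ formRadical form) :
    f a ∈ formRadical form' := by
  intro y
  obtain ⟨b, rfl⟩ := hf y
  rw [hform]
  exact ha b

theorem IsEARS.image [CharZero F] {R : Set A} (h : IsEARS form R) (hf : Function.Surjective f)
    (hform : ∀ a b, form' (f a) (f b) = form a b) : IsEARS form' (f '' R) where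
  toIsSymForm := h.toIsSymForm.of_surjective hf hform
  zero_mem := ⟨0, h.zero_mem, map_zero f⟩
  closure_eq_top := by
    rw [← AddMonoidHom.map_closure, h.closure_eq_top, AddSubgroup.map_top_of_surjective f hf]
  neg_mem := by
    rintro _ ⟨a, ha, rfl⟩
    exact ⟨-a, h.neg_mem a ha, map_neg f a⟩
  cartan := by
    rintro _ ⟨a, ha, rfl⟩ haa _ ⟨b, hb, rfl⟩
    simp only [hform] at haa ⊢
    exact h.cartan a ha haa b hb
  string := by
    rintro _ ⟨a, ha, rfl⟩ haa _ ⟨b, hb, rfl⟩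
    refine (h.toIsSymForm.of_surjective hf hform).root_string_eq_Icc haa ⟨b, hb, rfl⟩ ?_ ?_
    · rintro _ ⟨c, hc, rfl⟩ hcc
      simp only [hform] at hcc ⊢
      exact h.cartan c hc hcc a ha
    · rintro _ ⟨c, hc, rfl⟩
      rw [hform] at haa
      obtain ⟨p, q, hpq, hpqR⟩ := h.string a ha haa c hc
      refine ⟨p, q, by simpa only [hform] using hpq, fun k hpk hkq => ?_⟩
      exact ⟨c + k • a, (hpqR k).mpr ⟨hpk, hkq⟩, by rw [map_add, map_zsmul]⟩
  ns_string := by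
    rintro _ ⟨a, ha, rfl⟩ haa _ ⟨b, hb, rfl⟩ hab
    rw [hform] at haa hab
    exact (h.ns_string a ha haa b hb hab).imp (fun hba => ⟨b - a, hba, map_sub f b a⟩)
      (fun hba => ⟨b + a, hba, map_add f b a⟩)

theorem IsLFRSS.image [CharZero F] {R : Set A} (h : IsEARS form R) (hf : Function.Surjective f)
    (hform : ∀ a b, form' (f a) (f b) = form a b) (hker : ∀ a ∈ formRadical form, f a = 0) :
    IsLFRSS form' (f '' R) := by
  refine ⟨h.image hf hform, fun x hx => ?_⟩
  obtain ⟨a, rfl⟩ := hf x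
  exact hker a (mem_formRadical_of_map hform hx)

theorem IsIrreducibleRSS.image {R : Set A} (hs : IsSymForm form) (h : IsIrreducibleRSS form R)
    (hf : Function.Surjective f) (hform : ∀ a b, form' (f a) (f b) = form a b) :
    IsIrreducibleRSS form' (f '' R) := by
  obtain ⟨hre, hconn⟩ := h
  refine ⟨?_, ?_⟩
  · obtain ⟨a, ha, haa⟩ := hs.reRoots_ne_singleton_zero_iff.mp hre
    exact (hs.of_surjective hf hform).reRoots_ne_singleton_zero_iff.mpr
      ⟨f a, ⟨a, ha, rfl⟩, by rwa [hform]⟩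
  · rintro _ ⟨⟨a, ha, rfl⟩, ha'⟩ _ ⟨⟨b, hb, rfl⟩, hb'⟩
    refine (hconn a ⟨ha, fun h => ha' (map_mem_formRadical hf hform h)⟩ b
      ⟨hb, fun h => hb' (map_mem_formRadical hf hform h)⟩).image hform ?_
    rintro c ⟨hc, hc'⟩
    exact ⟨⟨c, hc, rfl⟩, fun h => hc' (mem_formRadical_of_map hform h)⟩

end Image

theorem stmt12 {F : Type*} [Field F] [CharZero F] {A : Type*} [AddCommGroup A]
    (form : A → A → F) (R : Set A) (h : IsEARS form R)
    (form' : A ⧸ radicalSubgroup form h.toIsSymForm →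
             A ⧸ radicalSubgroup form h.toIsSymForm → F)
    (hform' : ∀ a b : A, form' (QuotientAddGroup.mk a) (QuotientAddGroup.mk b) = form a b) :
    IsLFRSS form'
      ((QuotientAddGroup.mk : A → A ⧸ radicalSubgroup form h.toIsSymForm) '' R) ∧
    (IsIrreducibleRSS form R →
      IsIrreducibleRSS form'
        ((QuotientAddGroup.mk : A → A ⧸ radicalSubgroup form h.toIsSymForm) '' R)) := by
  have hf := QuotientAddGroup.mk'_surjective (radicalSubgroup form h.toIsSymForm)
  exact ⟨IsLFRSS.image h hf hform' fun a ha => (QuotientAddGroup.eq_zero_iff a).mpr ha,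
    fun hirr => hirr.image h.toIsSymForm hf hform'⟩
end
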